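/- arXiv:0705.4327 — 3 statements merged into one kernel-verified Lean document; each statement's English description precedes it below -/
import Mathlib

section
/- Let n be odd, n ≥ 3. The formal power series t^{n-1}·(1/(1-t²) + t^{n-1}/(1-t^{n-1})) has q-th coefficient equal to: 2 if q = k(n-1) for some integer k ≥ 2; 1 if q = (n-1)+2k for some k ∈ ℕ₀ and q ≠ k(n-1) for all integers k ≥ 2; and 0 otherwise. -/
/-! With `m = n - 1`, the series is `X^m/(1 - X^2) + X^(2m)/(1 - X^m)`, whose `q`-th coefficient is
`[q ∈ m + 2ℕ] + [q ∈ 2m + mℕ]`; since `m` is even, the second set lies inside the first. -/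

open scoped Classical

namespace PowerSeries

variable {K : Type*} [Field K] {m : ℕ}

theorem inv_one_sub_X_pow (hm : 0 < m) :
    (1 - X ^ m : K⟦X⟧)⁻¹ = mk fun q => if m ∣ q then 1 else 0 := by
  refine (inv_eq_iff_mul_eq_one (by simp [hm.ne'])).2 ?_
  ext q
  rw [mul_sub, mul_one, map_sub, coeff_mul_X_pow', coeff_mk, coeff_mk, coeff_one]
  rcases Nat.eq_zero_or_pos q with rfl | hq
  · simp [hm.ne']
  by_cases hmq : m ≤ q
  · simp [hmq, Nat.dvd_sub_iff_left hmq dvd_rfl, hq.ne']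
  · simp [hmq, hq.ne', mt (Nat.le_of_dvd hq) hmq]

theorem coeff_X_pow_mul_inv_one_sub_X_pow (hm : 0 < m) (d q : ℕ) :
    coeff q (X ^ d * (1 - X ^ m : K⟦X⟧)⁻¹) = if ∃ k, q = d + m * k then 1 else 0 := by
  rw [coeff_X_pow_mul', inv_one_sub_X_pow hm, coeff_mk]
  by_cases hdq : d ≤ q
  · have hdvd : m ∣ q - d ↔ ∃ k, q = d + m * k :=
      ⟨fun ⟨k, hk⟩ => ⟨k, by omega⟩, fun ⟨k, hk⟩ => ⟨k, by omega⟩⟩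
    simp only [hdq, hdvd, if_true]
  · have hnone : ¬ ∃ k, q = d + m * k := fun ⟨k, hk⟩ => hdq (by omega)
    simp only [hdq, hnone, if_false]

theorem coeff_X_pow_mul_inv_one_sub_X_sq_add_X_pow_mul_inv_one_sub_X_pow
    (hm : 0 < m) (hm_even : Even m) (q : ℕ) :
    coeff q (X ^ m * ((1 - X ^ 2)⁻¹ + X ^ m * (1 - X ^ m : K⟦X⟧)⁻¹)) =
      if ∃ k, 2 ≤ k ∧ q = k * m then 2 else if ∃ k, q = m + 2 * k then 1 else 0 := by
  have hsplit : X ^ m * ((1 - X ^ 2)⁻¹ + X ^ m * (1 - X ^ m : K⟦X⟧)⁻¹) =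
      X ^ m * (1 - X ^ 2)⁻¹ + X ^ (2 * m) * (1 - X ^ m)⁻¹ := by ring
  have hmult : (∃ k, q = 2 * m + m * k) ↔ ∃ k, 2 ≤ k ∧ q = k * m := by
    refine ⟨fun ⟨k, hk⟩ => ⟨2 + k, by omega, by rw [hk]; ring⟩, ?_⟩
    rintro ⟨_, hk, rfl⟩
    obtain ⟨i, rfl⟩ := Nat.exists_eq_add_of_le hk
    exact ⟨i, by ring⟩
  have hpar : (∃ k, 2 ≤ k ∧ q = k * m) → ∃ k, q = m + 2 * k := by
    rintro ⟨_, hk, rfl⟩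
    obtain ⟨i, rfl⟩ := Nat.exists_eq_add_of_le hk
    obtain ⟨j, rfl⟩ := hm_even
    exact ⟨(1 + i) * j, by ring⟩
  rw [hsplit, map_add, coeff_X_pow_mul_inv_one_sub_X_pow two_pos,
    coeff_X_pow_mul_inv_one_sub_X_pow hm, hmult]
  by_cases hmul : ∃ k, 2 ≤ k ∧ q = k * m
  · rw [if_pos (hpar hmul), if_pos hmul, if_pos hmul]
    norm_num
  · simp only [if_neg hmul, add_zero]

end PowerSeries

theorem stmt_4 (n : ℕ) (hn : Odd n) (hn3 : 3 ≤ n) (q : ℕ) :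
    (PowerSeries.coeff (R := ℚ) q)
      (PowerSeries.X ^ (n - 1) *
        ((1 - PowerSeries.X ^ 2)⁻¹ +
          PowerSeries.X ^ (n - 1) * (1 - PowerSeries.X ^ (n - 1))⁻¹)) =
    if ∃ k : ℕ, 2 ≤ k ∧ q = k * (n - 1) then 2
    else if ∃ k : ℕ, q = (n - 1) + 2 * k then 1
    else 0 :=
  PowerSeries.coeff_X_pow_mul_inv_one_sub_X_sq_add_X_pow_mul_inv_one_sub_X_pow (by omega)
    (Nat.Odd.sub_odd hn odd_one) q
end

section
/- Let n be even, n ≥ 2, and let b_q be defined by b_q = 2 if q = k(n-1) with k odd, k ≥ 3; b_q = 1 if q ∈ {(n-1)+2k : k ∈ ℕ₀} and q is not of the former form; b_q = 0 otherwise. Then lim_{m→∞} (1/m)·∑_{q=0}^{m} (-1)^q b_q = −n/(2(n-1)). -/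
open scoped Classical

theorem stmt_5 (n : ℕ) (hn : Even n) (hn2 : 2 ≤ n) (b : ℕ → ℕ)
    (hb : ∀ q, b q =
      if ∃ k : ℕ, Odd k ∧ 3 ≤ k ∧ q = k * (n - 1) then 2
      else if ∃ k : ℕ, q = (n - 1) + 2 * k then 1
      else 0) :
    Filter.Tendsto
      (fun m : ℕ => (1 / (m : ℝ)) * ∑ q ∈ Finset.range (m + 1), (-1 : ℝ) ^ q * (b q : ℝ))
      Filter.atTop (nhds (-((n : ℝ) / (2 * ((n : ℝ) - 1))))) := by
  set d := n - 1 with hd_def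
  have hd1 : 1 ≤ d := by omega
  have hd2 : d % 2 = 1 := by obtain ⟨t, ht⟩ := hn; omega
  -- pointwise rewriting of the summand
  have key : ∀ q : ℕ, (-1:ℝ)^q * (b q : ℝ)
      = -((if ∃ j : ℕ, q = (3+2*j)*d then (1:ℝ) else 0)
        + (if ∃ j : ℕ, q = d + 2*j then (1:ℝ) else 0)) := by
    intro q
    have hPiff : (∃ k : ℕ, Odd k ∧ 3 ≤ k ∧ q = k * d) ↔ (∃ j : ℕ, q = (3+2*j)*d) := by
      constructor
      · rintro ⟨k, hk, h3, rfl⟩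
        obtain ⟨a, ha⟩ := hk
        exact ⟨a - 1, by rw [show 3 + 2*(a-1) = k from by omega]⟩
      · rintro ⟨j, rfl⟩
        exact ⟨3 + 2*j, ⟨j+1, by ring⟩, by omega, rfl⟩
    rcases Nat.even_or_odd q with hq | hq
    · obtain ⟨t, ht⟩ := hq
      have h1 : ¬ ∃ j : ℕ, q = (3+2*j)*d := by
        rintro ⟨j, hj⟩
        have hodd : Odd ((3+2*j)*d) := Odd.mul ⟨j+1, by ring⟩ (Nat.odd_iff.mpr hd2)
        obtain ⟨s, hs⟩ := hodd
        have : q = 2*s + 1 := by rw [hj, hs]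
        omega
      have h2 : ¬ ∃ j : ℕ, q = d + 2*j := by rintro ⟨j, hj⟩; omega
      have hb0 : b q = 0 := by
        rw [hb q, if_neg (fun h => h1 (hPiff.mp h)), if_neg h2]
      simp [hb0, h1, h2]
    · have hpow : (-1:ℝ)^q = -1 := Odd.neg_one_pow hq
      rw [hpow, hb q]
      by_cases hP : ∃ j : ℕ, q = (3+2*j)*d
      · have hQ : ∃ j : ℕ, q = d + 2*j := by
          obtain ⟨j, rfl⟩ := hP
          exact ⟨(1+j)*d, by ring⟩
        rw [if_pos (hPiff.mpr hP), if_pos hP, if_pos hQ]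
        norm_num
      · rw [if_neg (fun h => hP (hPiff.mp h)), if_neg hP]
        by_cases hQ : ∃ j : ℕ, q = d + 2*j
        · rw [if_pos hQ, if_pos hQ]; norm_num
        · rw [if_neg hQ, if_neg hQ]; norm_num
  -- the sum as a count
  have hsum : ∀ m : ℕ, ∑ q ∈ Finset.range (m+1), (-1:ℝ)^q * (b q : ℝ)
      = -(((((Finset.range (m+1)).filter (fun q => ∃ j : ℕ, q = (3+2*j)*d)).card : ℝ))
        + ((((Finset.range (m+1)).filter (fun q => ∃ j : ℕ, q = d + 2*j)).card : ℝ))) := by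
    intro m
    rw [← Finset.sum_boole (p := fun q => ∃ j : ℕ, q = (3+2*j)*d),
        ← Finset.sum_boole (p := fun q => ∃ j : ℕ, q = d + 2*j),
        ← Finset.sum_add_distrib, ← Finset.sum_neg_distrib]
    exact Finset.sum_congr rfl fun q _ => key q
  -- counting the arithmetic-progression terms
  have cardQ : ∀ m : ℕ, d ≤ m →
      (((Finset.range (m+1)).filter (fun q => ∃ j : ℕ, q = d + 2*j)).card) = (m - d)/2 + 1 := by
    intro m hm
    have himg : (Finset.range (m+1)).filter (fun q => ∃ j : ℕ, q = d + 2*j)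
        = (Finset.range ((m - d)/2 + 1)).image (fun j => d + 2*j) := by
      ext q
      simp only [Finset.mem_filter, Finset.mem_range, Finset.mem_image, Nat.lt_succ_iff]
      constructor
      · rintro ⟨hq, j, rfl⟩
        exact ⟨j, by omega, rfl⟩
      · rintro ⟨j, hj, rfl⟩
        exact ⟨by omega, j, rfl⟩
    rw [himg, Finset.card_image_of_injective _ (fun a b h => by omega), Finset.card_range]
  have cardP : ∀ m : ℕ, 3*d ≤ m →
      (((Finset.range (m+1)).filter (fun q => ∃ j : ℕ, q = (3+2*j)*d)).card)
        = (m/d - 3)/2 + 1 := by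
    intro m hm
    have hdpos : 0 < d := hd1
    have hiff : ∀ j : ℕ, ((3+2*j)*d ≤ m ↔ j ≤ (m/d - 3)/2) := by
      intro j
      have h1 : 3+2*j ≤ m/d ↔ (3+2*j)*d ≤ m := Nat.le_div_iff_mul_le hdpos
      have h3 : 3 ≤ m/d := (Nat.le_div_iff_mul_le hdpos).mpr (by omega)
      generalize hx : (3+2*j)*d = x at h1 ⊢
      omega
    have himg : (Finset.range (m+1)).filter (fun q => ∃ j : ℕ, q = (3+2*j)*d)
        = (Finset.range ((m/d - 3)/2 + 1)).image (fun j => (3+2*j)*d) := by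
      ext q
      simp only [Finset.mem_filter, Finset.mem_range, Finset.mem_image, Nat.lt_succ_iff]
      constructor
      · rintro ⟨hq, j, rfl⟩
        exact ⟨j, (hiff j).mp hq, rfl⟩
      · rintro ⟨j, hj, rfl⟩
        exact ⟨(hiff j).mpr hj, j, rfl⟩
    have hinj : Function.Injective (fun j : ℕ => (3+2*j)*d) := by
      intro a b h
      simp only [] at h
      have := Nat.eq_of_mul_eq_mul_right hdpos h
      omega
    rw [himg, Finset.card_image_of_injective _ hinj, Finset.card_range]
  -- rewrite the limit value
  have hd0 : (0:ℝ) < (d:ℝ) := by exact_mod_cast hd1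
  have hn_eq : (n:ℝ) = (d:ℝ) + 1 := by
    have h : d + 1 = n := by omega
    exact_mod_cast h.symm
  have hc : (n:ℝ)/(2*((n:ℝ)-1)) = ((d:ℝ)+1)/(2*(d:ℝ)) := by rw [hn_eq]; norm_num
  rw [hc]
  -- main estimate
  have hmain : Filter.Tendsto
      (fun m : ℕ => (1/(m:ℝ)) * ∑ q ∈ Finset.range (m+1), (-1:ℝ)^q * (b q : ℝ)
        + ((d:ℝ)+1)/(2*(d:ℝ))) Filter.atTop (nhds 0) := by
    apply squeeze_zero_norm' (a := fun m : ℕ => (2*(d:ℝ)+10)/m)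
      ?_ (tendsto_const_div_atTop_nhds_zero_nat _)
    filter_upwards [Filter.eventually_ge_atTop (3*d+1)] with m hm
    have hmd : d ≤ m := by omega
    have hm3 : 3*d ≤ m := by omega
    have hm0 : (0:ℝ) < (m:ℝ) := by exact_mod_cast Nat.pos_of_ne_zero (by omega)
    rw [hsum m, cardP m hm3, cardQ m hmd]
    set u := m / d with hu
    set A0 := (m - d)/2 with hA0
    set C0 := (u - 3)/2 with hC0
    have hu3 : 3 ≤ u := by
      rw [hu]; exact (Nat.le_div_iff_mul_le hd1).mpr (by omega)
    have hA1 : d + 2*A0 ≤ m := by omega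
    have hA2 : m ≤ d + 2*A0 + 1 := by omega
    have hC1 : 3 + 2*C0 ≤ u := by omega
    have hC2 : u ≤ 3 + 2*C0 + 1 := by omega
    have hru : m % d + d * u = m := by rw [hu]; exact Nat.mod_add_div m d
    have hr : m % d < d := Nat.mod_lt _ (by omega)
    have rA1 : (d:ℝ) + 2*(A0:ℝ) ≤ m := by exact_mod_cast hA1
    have rA2 : (m:ℝ) ≤ (d:ℝ) + 2*(A0:ℝ) + 1 := by exact_mod_cast hA2
    have rC1 : (3:ℝ) + 2*(C0:ℝ) ≤ u := by exact_mod_cast hC1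
    have rC2 : (u:ℝ) ≤ 3 + 2*(C0:ℝ) + 1 := by exact_mod_cast hC2
    have rru : ((m % d : ℕ):ℝ) + (d:ℝ) * (u:ℝ) = m := by exact_mod_cast hru
    have rr : ((m % d : ℕ):ℝ) < (d:ℝ) := by exact_mod_cast hr
    have rrnn : (0:ℝ) ≤ ((m % d : ℕ):ℝ) := Nat.cast_nonneg _
    have hdnn : (0:ℝ) ≤ (d:ℝ) := le_of_lt hd0
    have hp1 : (d:ℝ)*((d:ℝ)+2*(A0:ℝ)) ≤ (d:ℝ)*(m:ℝ) := mul_le_mul_of_nonneg_left rA1 hdnn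
    have hp2 : (d:ℝ)*(m:ℝ) ≤ (d:ℝ)*((d:ℝ)+2*(A0:ℝ)+1) := mul_le_mul_of_nonneg_left rA2 hdnn
    have hp3 : (d:ℝ)*(3+2*(C0:ℝ)) ≤ (d:ℝ)*(u:ℝ) := mul_le_mul_of_nonneg_left rC1 hdnn
    have hp4 : (d:ℝ)*(u:ℝ) ≤ (d:ℝ)*(3+2*(C0:ℝ)+1) := mul_le_mul_of_nonneg_left rC2 hdnn
    have hZ1 : ((d:ℝ)+1)*m - 2*(d:ℝ)*(((A0:ℝ)+1) + ((C0:ℝ)+1)) ≤ 2*(d:ℝ)*(2*(d:ℝ)+10) := by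
      nlinarith [hp2, hp4, rru, rr, rrnn, hd0, sq_nonneg ((d:ℝ))]
    have hZ2 : -(2*(d:ℝ)*(2*(d:ℝ)+10)) ≤ ((d:ℝ)+1)*m - 2*(d:ℝ)*(((A0:ℝ)+1) + ((C0:ℝ)+1)) := by
      nlinarith [hp1, hp3, rru, rrnn, hd0, sq_nonneg ((d:ℝ))]
    have h2dm : (0:ℝ) < 2*(d:ℝ)*(m:ℝ) := by positivity
    have hEq : (1/(m:ℝ)) * (-((((C0+1 : ℕ)):ℝ) + (((A0+1 : ℕ)):ℝ))) + ((d:ℝ)+1)/(2*(d:ℝ))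
        = (((d:ℝ)+1)*m - 2*(d:ℝ)*(((A0:ℝ)+1)+((C0:ℝ)+1))) / (2*(d:ℝ)*m) := by
      push_cast
      field_simp
      ring
    rw [Real.norm_eq_abs, hEq, abs_div, abs_of_pos h2dm]
    calc |((d:ℝ)+1)*m - 2*(d:ℝ)*(((A0:ℝ)+1)+((C0:ℝ)+1))| / (2*(d:ℝ)*m)
        ≤ (2*(d:ℝ)*(2*(d:ℝ)+10)) / (2*(d:ℝ)*m) := by
          gcongr
          exact abs_le.mpr ⟨hZ2, hZ1⟩
      _ = (2*(d:ℝ)+10)/m := mul_div_mul_left _ _ (by positivity)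
  have hfin := hmain.sub_const (((d:ℝ)+1)/(2*(d:ℝ)))
  simp only [add_sub_cancel_right, zero_sub] at hfin
  exact hfin
end

section
/- Let n be odd, n ≥ 3, and let b_q be defined by b_q = 2 if q = k(n-1) with k ≥ 2; b_q = 1 if q ∈ {(n-1)+2k : k ∈ ℕ₀} and not of the former form; b_q = 0 otherwise. Then lim_{m→∞} (1/m)·∑_{q=0}^{m} (-1)^q b_q = (n+1)/(2(n-1)). -/
open scoped Classical

theorem stmt_6 (n : ℕ) (hn : Odd n) (hn3 : 3 ≤ n) (b : ℕ → ℕ)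
    (hb : ∀ q, b q =
      if ∃ k : ℕ, 2 ≤ k ∧ q = k * (n - 1) then 2
      else if ∃ k : ℕ, q = (n - 1) + 2 * k then 1
      else 0) :
    Filter.Tendsto
      (fun m : ℕ => (1 / (m : ℝ)) * ∑ q ∈ Finset.range (m + 1), (-1 : ℝ) ^ q * (b q : ℝ))
      Filter.atTop (nhds (((n : ℝ) + 1) / (2 * ((n : ℝ) - 1)))) := by
  obtain ⟨t, ht⟩ := hn
  set d := n - 1 with hd
  have hdt : d = 2 * t := by omega
  have hd2 : 2 ≤ d := by omega
  have hdpos : 0 < d := by omega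
  -- pointwise identity
  have hAB : ∀ q : ℕ, (∃ k, 2 ≤ k ∧ q = k * d) → (∃ k, q = d + 2 * k) := by
    rintro q ⟨k, hk2, rfl⟩
    obtain ⟨c, rfl⟩ : ∃ c, k = c + 2 := ⟨k - 2, by omega⟩
    exact ⟨(c + 1) * t, by rw [hdt]; ring⟩
  have hEvenB : ∀ q : ℕ, (∃ k, q = d + 2 * k) → Even q := by
    rintro q ⟨k, rfl⟩
    exact ⟨t + k, by omega⟩
  have hterm : ∀ q : ℕ, (-1:ℝ)^q * (b q : ℝ) =
      (if ∃ k, 2 ≤ k ∧ q = k * d then (1:ℝ) else 0)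
      + (if ∃ k, q = d + 2 * k then (1:ℝ) else 0) := by
    intro q
    rw [hb q]
    split_ifs with h1 h2 h2
    · rw [(hEvenB q (hAB q h1)).neg_one_pow]; norm_num
    · exact absurd (hAB q h1) h2
    · rw [(hEvenB q h2).neg_one_pow]; norm_num
    · norm_num
  have hsum : ∀ m : ℕ, ∑ q ∈ Finset.range (m+1), (-1:ℝ)^q * (b q : ℝ)
      = (((Finset.range (m+1)).filter (fun q => ∃ k, 2 ≤ k ∧ q = k * d)).card : ℝ)
        + (((Finset.range (m+1)).filter (fun q => ∃ k, q = d + 2 * k)).card : ℝ) := by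
    intro m
    rw [Finset.sum_congr rfl fun q _ => hterm q, Finset.sum_add_distrib,
      Finset.sum_boole, Finset.sum_boole]
  have hcB : ∀ m, d ≤ m →
      ((Finset.range (m+1)).filter (fun q => ∃ k, q = d + 2 * k)).card = (m - d)/2 + 1 := by
    intro m hm
    have himg : (Finset.range (m+1)).filter (fun q => ∃ k, q = d + 2 * k)
        = (Finset.range ((m-d)/2 + 1)).image (fun k => d + 2*k) := by
      ext q
      simp only [Finset.mem_filter, Finset.mem_image, Finset.mem_range, Nat.lt_succ_iff]
      constructor
      · rintro ⟨hq, k, rfl⟩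
        exact ⟨k, by omega, rfl⟩
      · rintro ⟨k, hk, rfl⟩
        exact ⟨by omega, k, rfl⟩
    rw [himg, Finset.card_image_of_injective _ (fun a b hab => by omega), Finset.card_range]
  have hcA : ∀ m, 2*d ≤ m →
      ((Finset.range (m+1)).filter (fun q => ∃ k, 2 ≤ k ∧ q = k * d)).card = m/d - 1 := by
    intro m hm
    have hK2 : 2 ≤ m / d := (Nat.le_div_iff_mul_le hdpos).mpr (by omega)
    have himg : (Finset.range (m+1)).filter (fun q => ∃ k, 2 ≤ k ∧ q = k * d)
        = (Finset.range (m/d - 1)).image (fun j => (j+2)*d) := by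
      ext q
      simp only [Finset.mem_filter, Finset.mem_image, Finset.mem_range, Nat.lt_succ_iff]
      constructor
      · rintro ⟨hq, k, hk2, rfl⟩
        have hk : k ≤ m / d := (Nat.le_div_iff_mul_le hdpos).mpr hq
        exact ⟨k - 2, by omega, by rw [show k - 2 + 2 = k from by omega]⟩
      · rintro ⟨j, hj, rfl⟩
        refine ⟨?_, j+2, by omega, rfl⟩
        have h1 : j + 2 ≤ m / d := by omega
        have h2 := (Nat.le_div_iff_mul_le hdpos).mp h1
        omega
    rw [himg, Finset.card_image_of_injective _
      (fun a b hab => by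
        have := Nat.eq_of_mul_eq_mul_right hdpos hab; omega), Finset.card_range]
  -- rewrite the limit value
  have hcast : (d:ℝ) = (n:ℝ) - 1 := by
    rw [hd, Nat.cast_sub (by omega : 1 ≤ n), Nat.cast_one]
  have hc : ((n:ℝ)+1)/(2*((n:ℝ)-1)) = ((d:ℝ)+2)/(2*(d:ℝ)) := by
    rw [← hcast]
    have hn' : (n:ℝ) = (d:ℝ) + 1 := by linarith
    rw [hn']
    ring_nf
  rw [hc]
  have hd0 : (0:ℝ) < d := by exact_mod_cast hdpos
  have hd2R : (2:ℝ) ≤ d := by exact_mod_cast hd2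
  have hm3 : Filter.Tendsto (fun m : ℕ => ((d:ℝ)+2)/(2*(d:ℝ)) - ((d:ℝ)+3)/(m:ℝ))
      Filter.atTop (nhds (((d:ℝ)+2)/(2*(d:ℝ)))) := by
    have h0 : Filter.Tendsto (fun m : ℕ => ((d:ℝ)+3)/(m:ℝ)) Filter.atTop (nhds 0) := by
      have := tendsto_one_div_atTop_nhds_zero_nat.const_mul ((d:ℝ)+3)
      simpa [div_eq_mul_inv, mul_comm] using this
    simpa using tendsto_const_nhds.sub h0
  refine tendsto_of_tendsto_of_tendsto_of_le_of_le' hm3 tendsto_const_nhds ?_ ?_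
  · refine Filter.eventually_atTop.2 ⟨2*d, fun m hm => ?_⟩
    rw [hsum m, hcA m hm, hcB m (by omega)]
    set Q := m / d with hQ
    set S := (m - d)/2 with hS
    have hK2 : 2 ≤ Q := (Nat.le_div_iff_mul_le hdpos).mpr (by omega)
    have n1 : d * Q + m % d = m := Nat.div_add_mod m d
    have n2 : m % d < d := Nat.mod_lt _ hdpos
    have hdm : d ≤ m := by omega
    have c1 : (d:ℝ) * (Q:ℝ) + ((m % d : ℕ):ℝ) = (m:ℝ) := by exact_mod_cast n1
    have c2 : ((m % d : ℕ):ℝ) < (d:ℝ) := by exact_mod_cast n2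
    have c2' : (0:ℝ) ≤ ((m % d : ℕ):ℝ) := by positivity
    have n4 : m - d ≤ 2 * S + 1 := by omega
    have c4 : (m:ℝ) - (d:ℝ) ≤ 2*(S:ℝ) + 1 := by
      have : ((m - d : ℕ):ℝ) ≤ 2*(S:ℝ) + 1 := by exact_mod_cast n4
      rwa [Nat.cast_sub hdm] at this
    have hm0 : (0:ℝ) < (m:ℝ) := by
      have : 0 < m := by omega
      exact_mod_cast this
    rw [Nat.cast_sub (by omega : 1 ≤ Q)]
    push_cast
    have heq : (1/(m:ℝ)) * (((Q:ℝ) - 1) + ((S:ℝ) + 1)) = ((Q:ℝ) + (S:ℝ))/(m:ℝ) := by ring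
    rw [heq]
    have hkey : ((d:ℝ)+2) * (m:ℝ) ≤ ((Q:ℝ) + (S:ℝ) + ((d:ℝ)+3)) * (2*(d:ℝ)) := by
      have hmul : (d:ℝ) * ((m:ℝ) - (d:ℝ)) ≤ (d:ℝ) * (2*(S:ℝ) + 1) :=
        mul_le_mul_of_nonneg_left c4 hd0.le
      nlinarith [sq_nonneg ((d:ℝ))]
    have hdiv : ((d:ℝ)+2)/(2*(d:ℝ)) ≤ ((Q:ℝ) + (S:ℝ) + ((d:ℝ)+3))/(m:ℝ) := by
      rw [div_le_div_iff₀ (by positivity) hm0]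
      linarith
    have hsplit : ((Q:ℝ) + (S:ℝ) + ((d:ℝ)+3))/(m:ℝ) = ((Q:ℝ)+(S:ℝ))/(m:ℝ) + ((d:ℝ)+3)/(m:ℝ) := by
      ring
    linarith [hdiv, hsplit.symm.le]
  · refine Filter.eventually_atTop.2 ⟨2*d, fun m hm => ?_⟩
    rw [hsum m, hcA m hm, hcB m (by omega)]
    set Q := m / d with hQ
    set S := (m - d)/2 with hS
    have hK2 : 2 ≤ Q := (Nat.le_div_iff_mul_le hdpos).mpr (by omega)
    have n1 : d * Q + m % d = m := Nat.div_add_mod m d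
    have n2 : m % d < d := Nat.mod_lt _ hdpos
    have hdm : d ≤ m := by omega
    have c1 : (d:ℝ) * (Q:ℝ) + ((m % d : ℕ):ℝ) = (m:ℝ) := by exact_mod_cast n1
    have c2' : (0:ℝ) ≤ ((m % d : ℕ):ℝ) := by positivity
    have n3 : 2 * S ≤ m - d := by omega
    have c3 : 2*(S:ℝ) ≤ (m:ℝ) - (d:ℝ) := by
      have : ((2*S : ℕ):ℝ) ≤ ((m - d : ℕ):ℝ) := by exact_mod_cast n3
      rw [Nat.cast_sub hdm] at this
      push_cast at this
      linarith
    have hm0 : (0:ℝ) < (m:ℝ) := by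
      have : 0 < m := by omega
      exact_mod_cast this
    rw [Nat.cast_sub (by omega : 1 ≤ Q)]
    push_cast
    have heq : (1/(m:ℝ)) * (((Q:ℝ) - 1) + ((S:ℝ) + 1)) = ((Q:ℝ) + (S:ℝ))/(m:ℝ) := by ring
    rw [heq, div_le_div_iff₀ hm0 (by positivity)]
    have hmul : (d:ℝ) * (2*(S:ℝ)) ≤ (d:ℝ) * ((m:ℝ) - (d:ℝ)) :=
      mul_le_mul_of_nonneg_left c3 hd0.le
    nlinarith [sq_nonneg ((d:ℝ))]
end
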